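/- Let v : ℝ^d → ℝ be differentiable, let h > 0 and C_I ≥ 0, and assume the discrete trace-inverse inequality ∫_{∂Ω} (∂v/∂n)² dσ ≤ (C_I/h) ∫_Ω ‖∇v‖² dV holds, with v², (∂v/∂n)² σ-integrable on ∂Ω and ‖∇v‖² Lebesgue-integrable on Ω. If the Nitsche coefficient satisfies γ ≥ 4 C_I, then the Nitsche bilinear form is coercive in the sense that a(v,v) ≥ (1/2) ( ∫_Ω ‖∇v‖² dV + (γ/h) ∫_{∂Ω} v² dσ ). -/

import Mathlib

open MeasureTheory Set RealInnerProductSpace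

/-!
The only term of `a(v, v)` without a sign is the cross term `-2 ∫_{∂Ω} v ∂v/∂n dσ`. By
Cauchy–Schwarz and the trace-inverse inequality its square is at most
`(C_I/h) (∫_Ω ‖∇v‖²) (∫_{∂Ω} v²)`, and AM–GM splits this as
`2 ∫ v ∂v/∂n ≤ ½ ∫_Ω ‖∇v‖² + (2 C_I/h) ∫_{∂Ω} v²`; the condition `γ ≥ 4 C_I` makes the last
term at most half of the penalty term.
-/

theorem measurable_gradient {E : Type*} [NormedAddCommGroup E] [InnerProductSpace ℝ E]
    [CompleteSpace E] [MeasurableSpace E] [BorelSpace E] (f : E → ℝ) :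
    Measurable (gradient f) :=
  (InnerProductSpace.toDual ℝ E).symm.continuous.measurable.comp (measurable_fderiv ℝ f)

section CauchySchwarz

variable {α : Type*} [MeasurableSpace α] {μ : Measure α} {f g : α → ℝ}

theorem integral_sub_const_mul_sq_eq (hf : MemLp f 2 μ) (hg : MemLp g 2 μ) (t : ℝ) :
    ∫ x, (f x - t * g x) ^ 2 ∂μ
      = (∫ x, g x ^ 2 ∂μ) * (t * t) + (-2 * ∫ x, f x * g x ∂μ) * t + ∫ x, f x ^ 2 ∂μ := by
  have hfg : Integrable (fun x => f x * g x) μ := hf.integrable_mul hg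
  have hexpand : (fun x => (f x - t * g x) ^ 2)
      = fun x => (t * t) * g x ^ 2 + (-2 * t) * (f x * g x) + f x ^ 2 := by
    ext x; ring
  have hquad : Integrable (fun x => (t * t) * g x ^ 2 + (-2 * t) * (f x * g x)) μ :=
    (hg.integrable_sq.const_mul _).add (hfg.const_mul _)
  rw [hexpand, integral_add hquad hf.integrable_sq,
    integral_add (hg.integrable_sq.const_mul _) (hfg.const_mul _),
    integral_const_mul, integral_const_mul]
  ring

theorem sq_integral_mul_le_integral_sq_mul_integral_sq (hf : MemLp f 2 μ) (hg : MemLp g 2 μ) :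
    (∫ x, f x * g x ∂μ) ^ 2 ≤ (∫ x, f x ^ 2 ∂μ) * ∫ x, g x ^ 2 ∂μ := by
  have hdiscrim := discrim_le_zero fun t => by
    rw [← integral_sub_const_mul_sq_eq hf hg t]
    exact integral_nonneg fun x => sq_nonneg _
  rw [discrim] at hdiscrim
  linarith

end CauchySchwarz

theorem two_mul_le_of_sq_le_of_trace_inverse {A B T X C γ h : ℝ} (hh : 0 < h) (hC : 0 ≤ C)
    (hγ : 4 * C ≤ γ) (hA : 0 ≤ A) (hB : 0 ≤ B) (hX : X ^ 2 ≤ B * T) (hT : T ≤ C / h * A) :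
    2 * X ≤ A / 2 + γ / h * B / 2 := by
  have hc : 0 ≤ C / h := div_nonneg hC hh.le
  have hγc : 4 * (C / h) ≤ γ / h := by
    rw [← mul_div_assoc]; exact div_le_div_of_nonneg_right hγ hh.le
  have hX' : X ^ 2 ≤ C / h * A * B := by nlinarith
  have hAMGM : 2 * X ≤ A / 2 + 2 * (C / h) * B := by
    nlinarith [sq_nonneg (A / 2 - 2 * (C / h) * B), mul_nonneg hc hB]
  nlinarith

theorem nitsche_coercivity_general {d : ℕ}
    (Ω : Set (EuclideanSpace ℝ (Fin d)))
    (n : EuclideanSpace ℝ (Fin d) → EuclideanSpace ℝ (Fin d)) (hn : Measurable n)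
    (v : EuclideanSpace ℝ (Fin d) → ℝ) (hv : Differentiable ℝ v)
    (h C_I γ : ℝ) (hh : 0 < h) (hC : 0 ≤ C_I)
    (σ : Measure (EuclideanSpace ℝ (Fin d)))
    (hint1 : Integrable (fun x => (v x) ^ 2) σ)
    (hint2 : Integrable (fun x => (⟪gradient v x, n x⟫ : ℝ) ^ 2) σ)
    (htrace : (∫ x, (⟪gradient v x, n x⟫ : ℝ) ^ 2 ∂σ)
        ≤ (C_I / h) * ∫ x in Ω, ‖gradient v x‖ ^ 2)
    (hγ : γ ≥ 4 * C_I) :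
    (∫ x in Ω, ⟪gradient v x, gradient v x⟫)
        + (∫ x, ((γ / h) * v x * v x - v x * ⟪gradient v x, n x⟫
            - ⟪gradient v x, n x⟫ * v x) ∂σ)
      ≥ (1 / 2) * ((∫ x in Ω, ‖gradient v x‖ ^ 2)
          + (γ / h) * ∫ x, (v x) ^ 2 ∂σ) := by
  set g := fun x => ⟪gradient v x, n x⟫
  have hvL2 : MemLp v 2 σ :=
    (memLp_two_iff_integrable_sq hv.continuous.aestronglyMeasurable).2 hint1
  have hgL2 : MemLp g 2 σ :=
    (memLp_two_iff_integrable_sq ((measurable_gradient v).inner hn).aestronglyMeasurable).2 hint2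
  have hbulk : ∫ x in Ω, ⟪gradient v x, gradient v x⟫ = ∫ x in Ω, ‖gradient v x‖ ^ 2 := by
    simp only [real_inner_self_eq_norm_sq]
  have hboundary : ∫ x, ((γ / h) * v x * v x - v x * g x - g x * v x) ∂σ
      = (γ / h) * ∫ x, v x ^ 2 ∂σ - 2 * ∫ x, v x * g x ∂σ := by
    have hvg : Integrable (fun x => v x * g x) σ := hvL2.integrable_mul hgL2
    rw [← integral_const_mul, ← integral_const_mul,
      ← integral_sub (hint1.const_mul _) (hvg.const_mul _)]
    congr 1; ext x; ring
  have hcross := two_mul_le_of_sq_le_of_trace_inverse hh hC hγ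
    (integral_nonneg fun x => sq_nonneg _) (integral_nonneg fun x => sq_nonneg _)
    (sq_integral_mul_le_integral_sq_mul_integral_sq hvL2 hgL2) htrace
  rw [hbulk, hboundary]
  linarith

/-- **Coercivity of the Nitsche bilinear form.**
Let `Ω ⊂ ℝ^d` be a bounded open set with boundary `∂Ω = frontier Ω`, let
`σ = μH[d-1] ⌊ ∂Ω` and let `n` be a measurable vector field (the outward unit normal).
Let `v` be differentiable, `h > 0`, `C_I ≥ 0`, and assume the discrete trace-inverse inequality
`∫_{∂Ω} (∂v/∂n)² dσ ≤ (C_I/h) ∫_Ω ‖∇v‖² dV`, with `v²`, `(∂v/∂n)²` σ-integrable and `‖∇v‖²`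
integrable on `Ω`. If the Nitsche coefficient satisfies `γ ≥ 4 C_I`, then
`a(v,v) ≥ (1/2) (∫_Ω ‖∇v‖² dV + (γ/h) ∫_{∂Ω} v² dσ)`. -/
theorem nitsche_coercivity {d : ℕ}
    (Ω : Set (EuclideanSpace ℝ (Fin d))) (hΩopen : IsOpen Ω)
    (hΩbdd : Bornology.IsBounded Ω)
    (n : EuclideanSpace ℝ (Fin d) → EuclideanSpace ℝ (Fin d)) (hn : Measurable n)
    (v : EuclideanSpace ℝ (Fin d) → ℝ) (hv : Differentiable ℝ v)
    (h C_I γ : ℝ) (hh : 0 < h) (hC : 0 ≤ C_I)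
    (σ : Measure (EuclideanSpace ℝ (Fin d)))
    (hσ : σ = (μH[(d : ℝ) - 1]).restrict (frontier Ω))
    (hint1 : Integrable (fun x => (v x) ^ 2) σ)
    (hint2 : Integrable (fun x => (⟪gradient v x, n x⟫ : ℝ) ^ 2) σ)
    (hint3 : IntegrableOn (fun x => ‖gradient v x‖ ^ 2) Ω volume)
    (htrace : (∫ x, (⟪gradient v x, n x⟫ : ℝ) ^ 2 ∂σ)
        ≤ (C_I / h) * ∫ x in Ω, ‖gradient v x‖ ^ 2)
    (hγ : γ ≥ 4 * C_I) :
    (∫ x in Ω, ⟪gradient v x, gradient v x⟫)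
        + (∫ x, ((γ / h) * v x * v x - v x * ⟪gradient v x, n x⟫
            - ⟪gradient v x, n x⟫ * v x) ∂σ)
      ≥ (1 / 2) * ((∫ x in Ω, ‖gradient v x‖ ^ 2)
          + (γ / h) * ∫ x, (v x) ^ 2 ∂σ) :=
  nitsche_coercivity_general Ω n hn v hv h C_I γ hh hC σ hint1 hint2 htrace hγ
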